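/- For the fundamental soliton q(t) = 2σ sech(2σt), the time-bandwidth product T_w(ε)·B_w(ε) satisfies T_w(ε)·B_w(ε) → π^{-2} ln²(2/ε)·(1 + o(1)) as ε → 0; more precisely, lim_{ε→0} T_w(ε)B_w(ε)/ln²(2/ε) = π^{-2}. -/

import Mathlib

/-!
Both energy densities are `sech²` profiles: `|q t|² = (2σ)² sech² (2σ t)` and, since the Fourier
transform of `sech` is `π sech (π ω / 2)` (a Beta integral `B((1 - iω)/2, (1 + iω)/2)` evaluated by
the reflection formula), `|q̂ ω|² = π² sech² (π ω / (4σ))`. The energy of `sech² (b t)` on `[-L, L]`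
is the fraction `tanh (b L)` of the total, so `T_w = artanh (1 - ε) / σ` and
`B_w = 4σ artanh (1 - ε) / π²`. Hence `T_w B_w = (2 artanh (1 - ε))² / π² = ln² ((2 - ε)/ε) / π²`,
and `ln ((2 - ε)/ε) ~ ln (2/ε)` as `ε → 0`.
-/

open Complex MeasureTheory Filter Topology Real

theorem Real.hasDerivAt_tanh (x : ℝ) : HasDerivAt Real.tanh ((Real.cosh x)⁻¹ ^ 2) x := by
  have h := (hasDerivAt_sinh x).div (hasDerivAt_cosh x) (cosh_pos x).ne'
  rw [show Real.sinh / Real.cosh = Real.tanh from funext fun y => (tanh_eq_sinh_div_cosh y).symm]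
    at h
  refine h.congr_deriv ?_
  rw [← sq, ← sq, cosh_sq_sub_sinh_sq, one_div, inv_pow]

theorem integral_sq_div_cosh_mul {b : ℝ} (hb : b ≠ 0) (a L : ℝ) :
    ∫ t in -L..L, (a / Real.cosh (b * t)) ^ 2 = 2 * a ^ 2 / b * Real.tanh (b * L) := by
  have hderiv (t : ℝ) : HasDerivAt (fun t => a ^ 2 / b * Real.tanh (b * t))
      ((a / Real.cosh (b * t)) ^ 2) t := by
    refine (((Real.hasDerivAt_tanh (b * t)).comp t ((hasDerivAt_id t).const_mul b)).const_mul
      (a ^ 2 / b)).congr_deriv ?_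
    field_simp
  rw [intervalIntegral.integral_eq_sub_of_hasDerivAt (fun t _ => hderiv t)
    (Continuous.intervalIntegrable
      (by fun_prop (disch := exact fun t => (cosh_pos _).ne')) _ _)]
  simp only [mul_neg, Real.tanh_neg]
  ring

theorem mul_eq_artanh_of_integral_sq_div_cosh_mul_eq {a b L ε : ℝ} (ha : a ≠ 0) (hb : b ≠ 0)
    (h : ∫ t in -L..L, (a / Real.cosh (b * t)) ^ 2 = (1 - ε) * (2 * a ^ 2 / b)) :
    b * L = artanh (1 - ε) := by
  rw [integral_sq_div_cosh_mul hb, mul_comm (1 - ε)] at h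
  rw [← artanh_tanh (b * L), mul_left_cancel₀ (by positivity) h]

/-- The inverse of `x = (1 + tanh t) / 2`, which carries `sech t dt` to the Beta density. -/
noncomputable def halfLogit (x : ℝ) : ℝ := (Real.log x - Real.log (1 - x)) / 2

theorem halfLogit_image_Ioo : halfLogit '' Set.Ioo 0 1 = Set.univ := by
  refine Set.eq_univ_of_forall fun t => ⟨(1 + Real.exp (-(2 * t)))⁻¹, ⟨by positivity, ?_⟩, ?_⟩
  · exact inv_lt_one_of_one_lt₀ (by linarith [Real.exp_pos (-(2 * t))])
  · have he := Real.exp_pos (-(2 * t))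
    have h1x : 1 - (1 + Real.exp (-(2 * t)))⁻¹
        = Real.exp (-(2 * t)) / (1 + Real.exp (-(2 * t))) := by
      field_simp
      ring
    rw [halfLogit, h1x, Real.log_inv, Real.log_div he.ne' (by positivity), Real.log_exp]
    ring

theorem hasDerivAt_halfLogit {x : ℝ} (hx : x ∈ Set.Ioo 0 1) :
    HasDerivAt halfLogit (2 * x * (1 - x))⁻¹ x := by
  obtain ⟨hx0, hx1⟩ := hx
  have hlog1 : HasDerivAt (fun x => Real.log (1 - x)) ((1 - x)⁻¹ * -1) x :=
    (Real.hasDerivAt_log (by linarith)).comp x ((hasDerivAt_id x).const_sub 1)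
  refine (((Real.hasDerivAt_log hx0.ne').sub hlog1).div_const 2).congr_deriv ?_
  have : 1 - x ≠ 0 := by linarith
  field_simp
  ring

theorem strictMonoOn_halfLogit : StrictMonoOn halfLogit (Set.Ioo 0 1) := by
  rintro x ⟨hx0, hx1⟩ y ⟨hy0, hy1⟩ hxy
  have := Real.log_lt_log hx0 hxy
  have := Real.log_lt_log (by linarith : 0 < 1 - y) (by linarith : 1 - y < 1 - x)
  simp only [halfLogit]
  linarith

theorem inv_mul_sech_halfLogit {x : ℝ} (hx : x ∈ Set.Ioo 0 1) :
    (2 * x * (1 - x))⁻¹ * (Real.cosh (halfLogit x))⁻¹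
      = Real.exp (-(Real.log x + Real.log (1 - x)) / 2) := by
  obtain ⟨hx0, hx1⟩ := hx
  set a := Real.log x
  set b := Real.log (1 - x)
  set E := Real.exp (-(a + b) / 2)
  have hea : Real.exp a = x := Real.exp_log hx0
  have heb : Real.exp b = 1 - x := Real.exp_log (by linarith)
  have hcosh : Real.cosh (halfLogit x) = E / 2 := by
    rw [Real.cosh_eq, halfLogit, show (a - b) / 2 = -(a + b) / 2 + a by ring,
      show -(-(a + b) / 2 + a) = -(a + b) / 2 + b by ring, Real.exp_add, Real.exp_add, hea, heb]
    ring
  have hE : E * E * (x * (1 - x)) = 1 := by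
    rw [← heb, ← hea, ← Real.exp_add, ← Real.exp_add, ← Real.exp_add, ← Real.exp_zero]
    ring_nf
  have : E ≠ 0 := (Real.exp_pos _).ne'
  have : 1 - x ≠ 0 := by linarith
  rw [hcosh]
  field_simp
  linear_combination -hE

theorem sech_halfLogit_mul_exp_eq_cpow {x : ℝ} (hx : x ∈ Set.Ioo 0 1) (w : ℝ) :
    |(2 * x * (1 - x))⁻¹| • (((Real.cosh (halfLogit x))⁻¹ : ℝ) *
      Complex.exp (-(I * w * halfLogit x)))
      = (x : ℂ) ^ ((1 - I * w) / 2 - 1) * (1 - (x : ℂ)) ^ ((1 + I * w) / 2 - 1) := by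
  have hx0 : 0 < x := hx.1
  have hx1 : 0 < 1 - x := sub_pos.mpr hx.2
  rw [abs_of_pos (by positivity), real_smul, ← mul_assoc, ← ofReal_mul,
    inv_mul_sech_halfLogit hx, ofReal_exp, ← Complex.exp_add,
    cpow_def_of_ne_zero (by exact_mod_cast hx0.ne'),
    show (1 : ℂ) - x = ((1 - x : ℝ) : ℂ) by push_cast; ring,
    cpow_def_of_ne_zero (by exact_mod_cast hx1.ne'), ← Complex.exp_add,
    ← ofReal_log hx0.le, ← ofReal_log hx1.le, halfLogit]
  congr 1
  push_cast
  ring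

theorem betaIntegral_one_sub_I_mul_div_two (w : ℝ) :
    betaIntegral ((1 - I * w) / 2) ((1 + I * w) / 2) = π / (Real.cosh (π * w / 2) : ℝ) := by
  have hGamma := Gamma_mul_Gamma_eq_betaIntegral (s := (1 - I * w) / 2) (t := (1 + I * w) / 2)
    (by simp) (by simp)
  rw [show (1 - I * w) / 2 + (1 + I * w) / 2 = 1 by ring, Complex.Gamma_one, one_mul] at hGamma
  rw [← hGamma, show (1 + I * w) / 2 = 1 - (1 - I * w) / 2 by ring,
    Complex.Gamma_mul_Gamma_one_sub,
    show π * ((1 - I * w) / 2) = π / 2 - (π * w / 2 : ℝ) * I by push_cast; ring,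
    Complex.sin_pi_div_two_sub, cos_mul_I, ofReal_cosh]

theorem integral_sech_mul_exp (w : ℝ) :
    ∫ t : ℝ, ((Real.cosh t)⁻¹ : ℝ) * Complex.exp (-(I * w * t))
      = π / (Real.cosh (π * w / 2) : ℝ) := by
  rw [← setIntegral_univ, ← halfLogit_image_Ioo,
    integral_image_eq_integral_abs_deriv_smul measurableSet_Ioo
      (fun x hx => (hasDerivAt_halfLogit hx).hasDerivWithinAt) strictMonoOn_halfLogit.injOn,
    setIntegral_congr_fun measurableSet_Ioo (fun x hx => sech_halfLogit_mul_exp_eq_cpow hx w),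
    ← betaIntegral_one_sub_I_mul_div_two, betaIntegral, intervalIntegral.integral_of_le zero_le_one,
    integral_Ioc_eq_integral_Ioo]

theorem integral_div_cosh_mul_exp {a : ℝ} (ha : 0 < a) (ω : ℝ) :
    ∫ t : ℝ, ((a / Real.cosh (a * t) : ℝ) : ℂ) * Complex.exp (-(I * ω * t))
      = π / (Real.cosh (π * ω / (2 * a)) : ℝ) := by
  have ha' : (a : ℂ) ≠ 0 := by exact_mod_cast ha.ne'
  set g : ℝ → ℂ := fun s => ((Real.cosh s)⁻¹ : ℝ) * Complex.exp (-(I * (ω / a : ℝ) * s))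
  have hg (t : ℝ) : ((a / Real.cosh (a * t) : ℝ) : ℂ) * Complex.exp (-(I * ω * t))
      = a * g (a * t) := by
    simp only [g]
    push_cast
    field_simp
  have hscale := Measure.integral_comp_mul_left g a
  rw [integral_sech_mul_exp, abs_of_pos (inv_pos.mpr ha)] at hscale
  simp_rw [hg]
  rw [integral_const_mul, hscale, real_smul, show π * (ω / a) / 2 = π * ω / (2 * a) by ring]
  push_cast
  field_simp

theorem tendsto_two_mul_artanh_one_sub_div_log :
    Tendsto (fun ε => 2 * artanh (1 - ε) / Real.log (2 / ε)) (𝓝[>] 0) (𝓝 1) := by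
  have hlog : Tendsto (fun ε : ℝ => Real.log (2 / ε)) (𝓝[>] 0) atTop :=
    tendsto_log_atTop.comp (tendsto_inv_nhdsGT_zero.const_mul_atTop two_pos)
  have hsmall : Tendsto (fun ε : ℝ => Real.log (1 - ε / 2)) (𝓝[>] 0) (𝓝 0) := by
    have : ContinuousAt (fun ε : ℝ => Real.log (1 - ε / 2)) 0 := by fun_prop (disch := norm_num)
    simpa using this.tendsto.mono_left nhdsWithin_le_nhds
  have heq : ∀ᶠ ε in 𝓝[>] (0 : ℝ),
      1 + Real.log (1 - ε / 2) / Real.log (2 / ε) = 2 * artanh (1 - ε) / Real.log (2 / ε) := by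
    filter_upwards [Ioo_mem_nhdsGT zero_lt_one] with ε ⟨hε0, hε1⟩
    have hpos : 0 < Real.log (2 / ε) := Real.log_pos (by rw [lt_div_iff₀ hε0]; linarith)
    rw [artanh_eq_half_log ⟨by linarith, by linarith⟩, sub_sub_cancel,
      show (1 + (1 - ε)) / ε = 2 / ε * (1 - ε / 2) by field_simp; ring,
      Real.log_mul (by positivity) (by linarith)]
    field_simp
  simpa using (tendsto_const_nhds.add (hsmall.div_atTop hlog)).congr' heq

/-- Time-bandwidth product of the fundamental soliton `q(t) = 2σ sech(2σ t)`:
`lim_{ε→0⁺} T_w(ε) B_w(ε) / ln²(2/ε) = π⁻²`, where `T_w(ε)` and `B_w(ε)` are the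
ε-energy duration and bandwidth (the bandwidth measured in ordinary frequency
`ω/(2π)`). -/
theorem fundamental_soliton_time_bandwidth_product (σ : ℝ) (hσ : 0 < σ)
    (q : ℝ → ℂ)
    (hq : ∀ t : ℝ, q t = 2 * σ * (1 / Real.cosh (2 * σ * t) : ℝ))
    (qhat : ℝ → ℂ)
    (hqhat : ∀ ω : ℝ, qhat ω = ∫ t : ℝ, q t * Complex.exp (-(Complex.I * ω * t)))
    (Tw Bw : ℝ → ℝ)
    (hTw : ∀ ε ∈ Set.Ioo (0:ℝ) 1,
      IsLeast {T : ℝ | 0 ≤ T ∧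
        ∫ t in (-(T/2))..(T/2), ‖q t‖ ^ 2 = (1 - ε) * (4 * σ)} (Tw ε))
    (hBw : ∀ ε ∈ Set.Ioo (0:ℝ) 1,
      IsLeast {B : ℝ | 0 ≤ B ∧
        (1/(2*π)) * ∫ ω in (-(π*B))..(π*B), ‖qhat ω‖ ^ 2 = (1 - ε) * (4 * σ)}
        (Bw ε)) :
    Tendsto (fun ε : ℝ => Tw ε * Bw ε / (Real.log (2/ε)) ^ 2) (𝓝[>] 0)
      (𝓝 (1 / π ^ 2)) := by
  have hq' (t : ℝ) : q t = ((2 * σ / Real.cosh (2 * σ * t) : ℝ) : ℂ) := by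
    rw [hq]; push_cast; ring
  have hnorm_q (t : ℝ) : ‖q t‖ = 2 * σ / Real.cosh (2 * σ * t) := by
    rw [hq', norm_real, Real.norm_of_nonneg (by positivity)]
  have hnorm_qhat (ω : ℝ) : ‖qhat ω‖ = π / Real.cosh (π / (4 * σ) * ω) := by
    rw [hqhat, funext hq', integral_div_cosh_mul_exp (by positivity), ← ofReal_div, norm_real,
      Real.norm_of_nonneg (by positivity)]
    ring_nf
  have hTw' : ∀ ε ∈ Set.Ioo (0 : ℝ) 1, Tw ε = artanh (1 - ε) / σ := fun ε hε => by
    rw [← mul_eq_artanh_of_integral_sq_div_cosh_mul_eq (a := 2 * σ) (b := 2 * σ) (L := Tw ε / 2)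
      (by positivity) (by positivity) (by simp_rw [← hnorm_q, (hTw ε hε).1.2]; field_simp; ring)]
    field_simp
  have hBw' : ∀ ε ∈ Set.Ioo (0 : ℝ) 1, Bw ε = 4 * σ * artanh (1 - ε) / π ^ 2 := fun ε hε => by
    have h := (hBw ε hε).1.2
    rw [one_div, inv_mul_eq_iff_eq_mul₀ (by positivity)] at h
    rw [← mul_eq_artanh_of_integral_sq_div_cosh_mul_eq (a := π) (b := π / (4 * σ)) (L := π * Bw ε)
      (by positivity) (by positivity) (by simp_rw [← hnorm_qhat, h]; field_simp)]
    field_simp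
  have hlim := (tendsto_two_mul_artanh_one_sub_div_log.pow 2).const_mul (1 / π ^ 2)
  rw [one_pow, mul_one] at hlim
  refine hlim.congr' ?_
  filter_upwards [Ioo_mem_nhdsGT zero_lt_one] with ε hε
  rw [hTw' ε hε, hBw' ε hε]
  field_simp
  ring
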